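/- For every integer n ≥ 7, P_n / 16^n < ( (n−2)(n+1) / ((n−1)n) )^(n(n−1)/2) · ( (n−2)/(n−1) )^n. -/

import Mathlib

/-!
Feeding `P n ≤ 16 P (n-1)` back into the recurrence gives `(n+1)² P (n+1) ≤ 8 (2n+1)(n+1) P n`,
hence `P (n+1) ≤ 16 P n` for all `n`: the sequence `P n / 16^n` is nonincreasing, and for `n ≥ 7`
it is at most `P 7 / 16^7 ≈ 0.0926`.

On the right, `t = n(n-1)/2 = C(n,2)` turns the first base into `(t-1)/t`, so with
`e m = ((m-1)/m)^m` the bound equals `e t · e (n-1) · (n-2)/(n-1)`. By Bernoulli's inequality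
`e` is increasing, so for `n ≥ 7` the bound is at least `e 21 · e 6 · 5/6 ≈ 0.1003`.
-/

open Set

def CLFRecurrence (P : ℕ → ℝ) : Prop :=
  ∀ n : ℕ, 1 ≤ n →
    ((n : ℝ) + 1) ^ 2 * P (n + 1)
      = 8 * (3 * (n : ℝ) ^ 2 + 3 * (n : ℝ) + 1) * P n - 128 * (n : ℝ) ^ 2 * P (n - 1)

namespace CLFRecurrence

variable {P : ℕ → ℝ}

theorem apply_add_two (hP : CLFRecurrence P) (n : ℕ) :
    P (n + 2) = (8 * (3 * ((n : ℝ) + 1) ^ 2 + 3 * ((n : ℝ) + 1) + 1) * P (n + 1)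
      - 128 * ((n : ℝ) + 1) ^ 2 * P n) / ((n : ℝ) + 2) ^ 2 := by
  have h := hP (n + 1) (by omega)
  push_cast at h
  rw [eq_div_iff (by positivity), ← h]
  ring

theorem apply_seven (hP : CLFRecurrence P) (hP0 : P 0 = 1) (hP1 : P 1 = 8) : P 7 = 24862720 := by
  norm_num [hP.apply_add_two, hP0, hP1]

theorem succ_le_sixteen_mul (hP : CLFRecurrence P) (hP0 : P 0 = 1) (hP1 : P 1 = 8)
    (hnonneg : ∀ n, 0 ≤ P n) (n : ℕ) : P (n + 1) ≤ 16 * P n := by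
  induction n with
  | zero => rw [hP0, hP1]; norm_num
  | succ n ih =>
    have h := hP (n + 1) (by omega)
    rw [Nat.add_sub_cancel] at h
    push_cast at h
    have hle : ((n : ℝ) + 2) ^ 2 * P (n + 2) ≤ ((n : ℝ) + 2) ^ 2 * (16 * P (n + 1)) := by
      nlinarith [hnonneg (n + 1)]
    exact le_of_mul_le_mul_left hle (by positivity)

theorem antitone_div_sixteen_pow (hP : CLFRecurrence P) (hP0 : P 0 = 1) (hP1 : P 1 = 8)
    (hnonneg : ∀ n, 0 ≤ P n) : Antitone fun n ↦ P n / 16 ^ n := by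
  refine antitone_nat_of_succ_le fun n ↦ ?_
  rw [div_le_div_iff₀ (by positivity) (by positivity), pow_succ]
  nlinarith [hP.succ_le_sixteen_mul hP0 hP1 hnonneg n, pow_pos (by norm_num : (0 : ℝ) < 16) n]

end CLFRecurrence

noncomputable def subOneDivPow (m : ℕ) : ℝ := (((m : ℝ) - 1) / m) ^ m

theorem subOneDivPow_nonneg (m : ℕ) : 0 ≤ subOneDivPow m := by
  rcases m with _ | m
  · simp [subOneDivPow]
  · unfold subOneDivPow
    push_cast
    rw [add_sub_cancel_right]
    positivity

theorem subOneDivPow_le_succ {m : ℕ} (hm : 2 ≤ m) : subOneDivPow m ≤ subOneDivPow (m + 1) := by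
  have hx : (2 : ℝ) ≤ m := by exact_mod_cast hm
  have hsq : (0 : ℝ) < (m : ℝ) ^ 2 - 1 := by nlinarith
  have hm0 : (m : ℝ) ≠ 0 := by positivity
  have hm1 : (m : ℝ) - 1 ≠ 0 := by linarith
  have hbern : (m : ℝ) / (m - 1) ≤ (1 + 1 / ((m : ℝ) ^ 2 - 1)) ^ (m + 1) := by
    calc (m : ℝ) / (m - 1) = 1 + ((m + 1 : ℕ) : ℝ) * (1 / ((m : ℝ) ^ 2 - 1)) := by
          push_cast; field_simp; ring
      _ ≤ _ := one_add_mul_le_pow (by linarith [one_div_pos.2 hsq]) _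
  have hbase : (0 : ℝ) ≤ ((m : ℝ) - 1) / m := div_nonneg (by linarith) (by positivity)
  unfold subOneDivPow
  push_cast
  calc (((m : ℝ) - 1) / m) ^ m = (((m : ℝ) - 1) / m) ^ (m + 1) * (m / (m - 1)) := by
        rw [pow_succ, mul_assoc, div_mul_div_cancel₀ hm0, div_self hm1, mul_one]
    _ ≤ (((m : ℝ) - 1) / m) ^ (m + 1) * (1 + 1 / ((m : ℝ) ^ 2 - 1)) ^ (m + 1) := by
        gcongr
    _ = (((m : ℝ) + 1 - 1) / (m + 1)) ^ (m + 1) := by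
        rw [← mul_pow]; congr 1; field_simp; ring

theorem monotoneOn_subOneDivPow : MonotoneOn subOneDivPow (Ici 2) :=
  monotoneOn_nat_Ici_of_le_succ fun _ hm ↦ subOneDivPow_le_succ hm

theorem sub_two_mul_add_one_div_pow_eq_subOneDivPow_choose_two {n : ℕ} (hn : 2 ≤ n) :
    (((n : ℝ) - 2) * ((n : ℝ) + 1) / (((n : ℝ) - 1) * (n : ℝ))) ^ (n * (n - 1) / 2)
      = subOneDivPow (n.choose 2) := by
  have hx : (2 : ℝ) ≤ n := by exact_mod_cast hn
  rw [subOneDivPow, Nat.cast_choose_two, ← Nat.choose_two_right]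
  congr 1
  field_simp
  ring

theorem sub_two_div_sub_one_pow_eq {n : ℕ} (hn : 1 ≤ n) :
    (((n : ℝ) - 2) / ((n : ℝ) - 1)) ^ n
      = subOneDivPow (n - 1) * (((n : ℝ) - 2) / ((n : ℝ) - 1)) := by
  obtain ⟨m, rfl⟩ : ∃ m, n = m + 1 := ⟨n - 1, by omega⟩
  rw [subOneDivPow, Nat.add_sub_cancel]
  push_cast
  rw [add_sub_cancel_right, show (m : ℝ) + 1 - 2 = m - 1 by ring, pow_succ]

theorem Pn_over_16n_upper_bound (P : ℕ → ℝ)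
    (hP0 : P 0 = 1) (hP1 : P 1 = 8)
    (hPrec : ∀ n : ℕ, 1 ≤ n →
      ((n : ℝ) + 1) ^ 2 * P (n + 1)
        = 8 * (3 * (n : ℝ) ^ 2 + 3 * (n : ℝ) + 1) * P n - 128 * (n : ℝ) ^ 2 * P (n - 1))
    (hPpos : ∀ n : ℕ, 0 < P n) :
    ∀ n : ℕ, 7 ≤ n →
      P n / 16 ^ n
        < (((n : ℝ) - 2) * ((n : ℝ) + 1) / (((n : ℝ) - 1) * (n : ℝ))) ^ (n * (n - 1) / 2)
            * (((n : ℝ) - 2) / ((n : ℝ) - 1)) ^ n := by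
  intro n hn
  have hrec : CLFRecurrence P := hPrec
  have hlhs : P n / 16 ^ n ≤ 24862720 / 16 ^ 7 := by
    rw [← hrec.apply_seven hP0 hP1]
    exact hrec.antitone_div_sixteen_pow hP0 hP1 (fun k ↦ (hPpos k).le) hn
  have hchoose : 21 ≤ n.choose 2 :=
    (by decide : 21 ≤ Nat.choose 7 2).trans (Nat.choose_le_choose 2 hn)
  have hA : subOneDivPow 21 ≤ subOneDivPow (n.choose 2) :=
    monotoneOn_subOneDivPow (by norm_num) (by simp only [mem_Ici]; omega) hchoose
  have hE : subOneDivPow 6 ≤ subOneDivPow (n - 1) :=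
    monotoneOn_subOneDivPow (by norm_num) (by simp only [mem_Ici]; omega) (by omega)
  have hr : (5 : ℝ) / 6 ≤ ((n : ℝ) - 2) / ((n : ℝ) - 1) := by
    have hx : (7 : ℝ) ≤ n := by exact_mod_cast hn
    rw [div_le_div_iff₀ (by norm_num) (by linarith)]
    linarith
  rw [sub_two_mul_add_one_div_pow_eq_subOneDivPow_choose_two (by omega),
    sub_two_div_sub_one_pow_eq (by omega)]
  calc P n / 16 ^ n ≤ 24862720 / 16 ^ 7 := hlhs
    _ < subOneDivPow 21 * (subOneDivPow 6 * (5 / 6)) := by norm_num [subOneDivPow]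
    _ ≤ _ := mul_le_mul hA (mul_le_mul hE hr (by norm_num) (subOneDivPow_nonneg _))
        (mul_nonneg (subOneDivPow_nonneg _) (by norm_num)) (subOneDivPow_nonneg _)
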